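/- For τ > −1 and C ∈ ℝ, define I_τ(C) = ∫_0^∞ r^τ · exp(−(r + C)²/2) dr. Then for every τ > 0 and all C, D ∈ ℝ, I_τ(C) ≤ I_τ(D) · exp(−τ · (I_{τ−1}(D)/I_τ(D)) · (C − D)). -/

import Mathlib

open Real

/-- `I_τ(C) = ∫_0^∞ r^τ exp(−(r+C)²/2) dr`. -/
noncomputable def Igauss (τ C : ℝ) : ℝ :=
  ∫ r in Set.Ioi (0 : ℝ), r ^ τ * Real.exp (-(r + C) ^ 2 / 2)

namespace IgaussAux

open MeasureTheory Set Filter Topology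

noncomputable def w (C r : ℝ) : ℝ := Real.exp (-(r + C) ^ 2 / 2)

lemma w_pos (C r : ℝ) : 0 < w C r := Real.exp_pos _

lemma continuous_w (C : ℝ) : Continuous (w C) := by
  unfold w; fun_prop

lemma neg_sq_le (C r : ℝ) : -(r + C) ^ 2 / 2 ≤ C ^ 2 / 2 + -(1/4 * r ^ 2) := by
  nlinarith [sq_nonneg (r + 2*C)]

lemma contOn (σ C : ℝ) : ContinuousOn (fun r : ℝ => r ^ σ * w C r) (Ioi 0) := by
  intro x hx
  exact ((Real.continuousAt_rpow_const x σ (Or.inl (ne_of_gt hx))).continuousWithinAt).mul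
    ((continuous_w C).continuousAt.continuousWithinAt)

lemma integrable_rpow_w {σ : ℝ} (hσ : -1 < σ) (C : ℝ) :
    IntegrableOn (fun r : ℝ => r ^ σ * w C r) (Ioi 0) := by
  have h := (integrableOn_rpow_mul_exp_neg_mul_sq (b := 1/4) (by norm_num) hσ).const_mul
    (Real.exp (C ^ 2 / 2))
  apply Integrable.mono' h ((contOn σ C).aestronglyMeasurable measurableSet_Ioi)
  filter_upwards [ae_restrict_mem measurableSet_Ioi] with r hr
  have hr0 : (0:ℝ) < r := hr
  rw [Real.norm_eq_abs, abs_of_nonneg (mul_nonneg (Real.rpow_nonneg hr0.le σ) (w_pos C r).le)]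
  have : w C r ≤ Real.exp (C ^ 2 / 2) * Real.exp (-(1/4 * r ^ 2)) := by
    rw [← Real.exp_add]
    exact Real.exp_le_exp.2 (neg_sq_le C r)
  calc r ^ σ * w C r ≤ r ^ σ * (Real.exp (C ^ 2 / 2) * Real.exp (-(1/4 * r ^ 2))) := by
        exact mul_le_mul_of_nonneg_left this (Real.rpow_nonneg hr0.le σ)
    _ = Real.exp (C ^ 2 / 2) * (r ^ σ * Real.exp (-(1/4) * r ^ 2)) := by ring_nf

lemma igauss_eq (σ C : ℝ) : Igauss σ C = ∫ r in Ioi (0:ℝ), r ^ σ * w C r := rfl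

lemma igauss_pos {σ : ℝ} (hσ : -1 < σ) (C : ℝ) : 0 < Igauss σ C := by
  rw [igauss_eq]
  rw [setIntegral_pos_iff_support_of_nonneg_ae]
  · refine lt_of_lt_of_le ?_ (measure_mono (subset_inter (fun x hx => ?_) Subset.rfl))
    · rw [Real.volume_Ioi]; exact ENNReal.zero_lt_top
    · exact (mul_pos (Real.rpow_pos_of_pos hx σ) (w_pos C x)).ne'
  · filter_upwards [ae_restrict_mem measurableSet_Ioi] with r hr
    exact mul_nonneg (Real.rpow_nonneg (le_of_lt hr) σ) (w_pos C r).le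
  · exact integrable_rpow_w hσ C

lemma w_swap_ineq {C1 C2 x y : ℝ} (h : C1 ≤ C2) :
    0 ≤ (y - x) * (w C2 x * w C1 y - w C1 x * w C2 y) := by
  have hws : w C2 x * w C1 y = w C1 x * w C2 y * Real.exp ((y - x) * (C2 - C1)) := by
    unfold w
    rw [← Real.exp_add, ← Real.exp_add, ← Real.exp_add]
    congr 1
    ring
  rw [hws]
  have key : 0 ≤ (y - x) * (Real.exp ((y - x) * (C2 - C1)) - 1) := by
    rcases le_total x y with hxy | hxy
    · have : (1:ℝ) ≤ Real.exp ((y - x) * (C2 - C1)) :=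
        Real.one_le_exp (mul_nonneg (by linarith) (by linarith))
      nlinarith
    · have : Real.exp ((y - x) * (C2 - C1)) ≤ 1 :=
        Real.exp_le_one_iff.2 (mul_nonpos_of_nonpos_of_nonneg (by linarith) (by linarith))
      nlinarith
  have hA : 0 < w C1 x * w C2 y := mul_pos (w_pos _ _) (w_pos _ _)
  calc (0:ℝ) ≤ (w C1 x * w C2 y) * ((y - x) * (Real.exp ((y - x) * (C2 - C1)) - 1)) :=
        mul_nonneg hA.le key
    _ = (y - x) * (w C1 x * w C2 y * Real.exp ((y - x) * (C2 - C1)) - w C1 x * w C2 y) := by ring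

lemma key_pointwise {τ : ℝ} {C1 C2 x y : ℝ} (h : C1 ≤ C2) (hx : 0 < x) (hy : 0 < y) :
    x ^ (τ - 1) * w C1 x * (y ^ τ * w C2 y) + y ^ (τ - 1) * w C1 y * (x ^ τ * w C2 x)
      ≤ x ^ (τ - 1) * w C2 x * (y ^ τ * w C1 y) + y ^ (τ - 1) * w C2 y * (x ^ τ * w C1 x) := by
  have hxτ : x ^ τ = x ^ (τ - 1) * x := by
    rw [← Real.rpow_add_one hx.ne', sub_add_cancel]
  have hyτ : y ^ τ = y ^ (τ - 1) * y := by
    rw [← Real.rpow_add_one hy.ne', sub_add_cancel]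
  have hab : 0 ≤ x ^ (τ - 1) * y ^ (τ - 1) :=
    mul_nonneg (Real.rpow_nonneg hx.le _) (Real.rpow_nonneg hy.le _)
  have key := w_swap_ineq (x := x) (y := y) h
  rw [hxτ, hyτ]
  nlinarith [mul_nonneg hab key]

lemma ratio_mono {τ : ℝ} (hτ : 0 < τ) {C1 C2 : ℝ} (h : C1 ≤ C2) :
    Igauss (τ - 1) C1 * Igauss τ C2 ≤ Igauss (τ - 1) C2 * Igauss τ C1 := by
  have hτ1 : (-1:ℝ) < τ - 1 := by linarith
  have hτ0 : (-1:ℝ) < τ := by linarith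
  set μ : Measure ℝ := volume.restrict (Ioi 0) with hμ
  set P : Measure (ℝ × ℝ) := μ.prod μ with hP
  set f1 : ℝ → ℝ := fun r => r ^ (τ - 1) * w C1 r with hf1
  set f2 : ℝ → ℝ := fun r => r ^ (τ - 1) * w C2 r with hf2
  set g1 : ℝ → ℝ := fun r => r ^ τ * w C1 r with hg1
  set g2 : ℝ → ℝ := fun r => r ^ τ * w C2 r with hg2
  have if1 : Integrable f1 μ := integrable_rpow_w hτ1 C1
  have if2 : Integrable f2 μ := integrable_rpow_w hτ1 C2
  have ig1 : Integrable g1 μ := integrable_rpow_w hτ0 C1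
  have ig2 : Integrable g2 μ := integrable_rpow_w hτ0 C2
  have e1 : Igauss (τ - 1) C1 * Igauss τ C2 = ∫ z, f1 z.1 * g2 z.2 ∂P :=
    (integral_prod_mul f1 g2).symm
  have e2 : Igauss (τ - 1) C2 * Igauss τ C1 = ∫ z, f2 z.1 * g1 z.2 ∂P :=
    (integral_prod_mul f2 g1).symm
  rw [e1, e2]
  have mp : MeasurePreserving (Prod.swap : ℝ × ℝ → ℝ × ℝ) P P := Measure.measurePreserving_swap
  have swap_int : ∀ (F : ℝ × ℝ → ℝ), ∫ z, F (Prod.swap z) ∂P = ∫ z, F z ∂P := fun F =>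
    mp.integral_comp (MeasurableEquiv.prodComm (α := ℝ) (β := ℝ)).measurableEmbedding F
  have IF : Integrable (fun z : ℝ × ℝ => f1 z.1 * g2 z.2) P := if1.mul_prod ig2
  have IFs : Integrable (fun z : ℝ × ℝ => f1 z.2 * g2 z.1) P := by
    have := (ig2.mul_prod if1)
    simpa [mul_comm] using this
  have IG : Integrable (fun z : ℝ × ℝ => f2 z.1 * g1 z.2) P := if2.mul_prod ig1
  have IGs : Integrable (fun z : ℝ × ℝ => f2 z.2 * g1 z.1) P := by
    have := (ig1.mul_prod if2)
    simpa [mul_comm] using this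
  have hswapF : ∫ z, f1 z.2 * g2 z.1 ∂P = ∫ z, f1 z.1 * g2 z.2 ∂P :=
    swap_int (fun z => f1 z.1 * g2 z.2)
  have hswapG : ∫ z, f2 z.2 * g1 z.1 ∂P = ∫ z, f2 z.1 * g1 z.2 ∂P :=
    swap_int (fun z => f2 z.1 * g1 z.2)
  have hmem : ∀ᵐ z ∂P, z ∈ (Ioi (0:ℝ)) ×ˢ (Ioi (0:ℝ)) := by
    rw [hP, hμ, Measure.prod_restrict]
    exact ae_restrict_mem (measurableSet_Ioi.prod measurableSet_Ioi)
  have hle : ∫ z, (f1 z.1 * g2 z.2 + f1 z.2 * g2 z.1) ∂P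
      ≤ ∫ z, (f2 z.1 * g1 z.2 + f2 z.2 * g1 z.1) ∂P := by
    refine integral_mono_ae (IF.add IFs) (IG.add IGs) ?_
    filter_upwards [hmem] with z hz
    have hx : (0:ℝ) < z.1 := hz.1
    have hy : (0:ℝ) < z.2 := hz.2
    simpa [hf1, hf2, hg1, hg2] using key_pointwise (τ := τ) h hx hy
  rw [integral_add IF IFs, integral_add IG IGs, hswapF, hswapG] at hle
  linarith

lemma hasDerivAt_w_param (r x : ℝ) : HasDerivAt (fun c => w c r) (w x r * (-(r + x))) x := by
  unfold w
  have h1 : HasDerivAt (fun c : ℝ => r + c) 1 x := (hasDerivAt_id x).const_add r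
  have h2 := ((h1.fun_pow 2).fun_neg.div_const 2).exp
  convert h2 using 1
  ring

lemma hasDerivAt_w_r (C r : ℝ) : HasDerivAt (w C) (w C r * (-(r + C))) r := by
  unfold w
  have h1 : HasDerivAt (fun r : ℝ => r + C) 1 r := (hasDerivAt_id r).add_const C
  have h2 := ((h1.fun_pow 2).fun_neg.div_const 2).exp
  convert h2 using 1
  ring

lemma hasDerivAt_integrand (τ C : ℝ) {r : ℝ} (hr : 0 < r) :
    HasDerivAt (fun r => r ^ τ * w C r)
      (τ * (r ^ (τ - 1) * w C r) + r ^ τ * (w C r * (-(r + C)))) r := by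
  have h1 := Real.hasDerivAt_rpow_const (x := r) (p := τ) (Or.inl hr.ne')
  refine (h1.fun_mul (hasDerivAt_w_r C r)).congr_deriv ?_
  ring

lemma tendsto_rpow_w_atTop (τ C : ℝ) :
    Tendsto (fun r : ℝ => r ^ τ * w C r) atTop (𝓝 0) := by
  have h := (tendsto_rpow_mul_exp_neg_mul_atTop_nhds_zero τ (1/4) (by norm_num)).const_mul
    (Real.exp (C ^ 2 / 2))
  rw [mul_zero] at h
  apply tendsto_of_tendsto_of_tendsto_of_le_of_le' tendsto_const_nhds h
  · filter_upwards [eventually_ge_atTop (0:ℝ)] with r hr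
    exact mul_nonneg (Real.rpow_nonneg hr τ) (w_pos C r).le
  · filter_upwards [eventually_ge_atTop (1:ℝ)] with r hr
    have h1 : w C r ≤ Real.exp (C ^ 2 / 2) * Real.exp (-(1/4) * r) := by
      rw [← Real.exp_add]
      apply Real.exp_le_exp.2
      have : -(1/4 * r ^ 2) ≤ -(1/4) * r := by nlinarith
      linarith [neg_sq_le C r]
    calc r ^ τ * w C r ≤ r ^ τ * (Real.exp (C ^ 2 / 2) * Real.exp (-(1/4) * r)) :=
          mul_le_mul_of_nonneg_left h1 (Real.rpow_nonneg (by linarith) τ)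
      _ = Real.exp (C ^ 2 / 2) * (r ^ τ * Real.exp (-(1/4) * r)) := by ring

lemma contOn_lin (τ x : ℝ) :
    ContinuousOn (fun r : ℝ => r ^ τ * (w x r * (-(r + x)))) (Ioi 0) := by
  intro r hr
  exact ((Real.continuousAt_rpow_const r τ (Or.inl (ne_of_gt hr))).continuousWithinAt).mul
    (((continuous_w x).mul (by fun_prop)).continuousAt.continuousWithinAt)

lemma integrable_rpow_w_lin {τ : ℝ} (hτ : -1 < τ) (x : ℝ) :
    IntegrableOn (fun r : ℝ => r ^ τ * (w x r * (-(r + x)))) (Ioi 0) := by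
  have h := (integrable_rpow_w (by linarith : (-1:ℝ) < τ + 1) x).add
    ((integrable_rpow_w hτ x).const_mul |x|)
  apply Integrable.mono' h ((contOn_lin τ x).aestronglyMeasurable measurableSet_Ioi)
  filter_upwards [ae_restrict_mem measurableSet_Ioi] with r hr
  have hr0 : (0:ℝ) < r := hr
  have hrτ : r ^ (τ + 1) = r ^ τ * r := Real.rpow_add_one hr0.ne' τ
  rw [Real.norm_eq_abs, abs_mul, abs_mul, abs_neg,
    abs_of_nonneg (Real.rpow_nonneg hr0.le τ), abs_of_nonneg (w_pos x r).le]
  have habs : |r + x| ≤ r + |x| := (abs_add_le r x).trans (by rw [abs_of_nonneg hr0.le])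
  calc r ^ τ * (w x r * |r + x|) ≤ r ^ τ * (w x r * (r + |x|)) := by
        apply mul_le_mul_of_nonneg_left _ (Real.rpow_nonneg hr0.le τ)
        exact mul_le_mul_of_nonneg_left habs (w_pos x r).le
    _ = r ^ (τ + 1) * w x r + |x| * (r ^ τ * w x r) := by rw [hrτ]; ring

lemma cont_within_zero {τ : ℝ} (hτ : 0 < τ) (C : ℝ) :
    ContinuousWithinAt (fun r : ℝ => r ^ τ * w C r) (Ici 0) 0 := by
  apply ContinuousWithinAt.mul
  · exact (Real.continuousAt_rpow_const 0 τ (Or.inr hτ.le)).continuousWithinAt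
  · exact (continuous_w C).continuousAt.continuousWithinAt

lemma integral_deriv {τ : ℝ} (hτ : 0 < τ) (C : ℝ) :
    ∫ r in Ioi (0:ℝ), r ^ τ * (w C r * (-(r + C))) = -(τ * Igauss (τ - 1) C) := by
  have hτ1 : (-1:ℝ) < τ - 1 := by linarith
  have hτ0 : (-1:ℝ) < τ := by linarith
  have int1 : IntegrableOn (fun r : ℝ => τ * (r ^ (τ - 1) * w C r)) (Ioi 0) :=
    (integrable_rpow_w hτ1 C).const_mul τ
  have int2 : IntegrableOn (fun r : ℝ => r ^ τ * (w C r * (-(r + C)))) (Ioi 0) :=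
    integrable_rpow_w_lin hτ0 C
  have key : ∫ r in Ioi (0:ℝ),
      (τ * (r ^ (τ - 1) * w C r) + r ^ τ * (w C r * (-(r + C))))
      = 0 - (0:ℝ) ^ τ * w C 0 := by
    apply integral_Ioi_of_hasDerivAt_of_tendsto (cont_within_zero hτ C)
      (fun r hr => hasDerivAt_integrand τ C hr) (int1.add int2) (tendsto_rpow_w_atTop τ C)
  rw [integral_add int1 int2, MeasureTheory.integral_const_mul] at key
  have h0 : (0:ℝ) ^ τ = 0 := Real.zero_rpow hτ.ne'
  rw [igauss_eq]
  rw [h0] at key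
  linarith [key]

lemma hasDerivAt_igauss {τ : ℝ} (hτ : 0 < τ) (C : ℝ) :
    HasDerivAt (fun c => Igauss τ c) (-(τ * Igauss (τ - 1) C)) C := by
  have hτ0 : (-1:ℝ) < τ := by linarith
  set K : ℝ := |C| + 1 with hK
  have hKpos : 0 < K := by positivity
  have h := hasDerivAt_integral_of_dominated_loc_of_deriv_le
    (μ := volume.restrict (Ioi (0:ℝ)))
    (F := fun x r => r ^ τ * w x r)
    (F' := fun x r => r ^ τ * (w x r * (-(r + x))))
    (x₀ := C) (s := Metric.ball C 1)
    (bound := fun r => Real.exp (K ^ 2 / 2) * (r ^ (τ + 1) * Real.exp (-(1/4) * r ^ 2))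
      + (Real.exp (K ^ 2 / 2) * K) * (r ^ τ * Real.exp (-(1/4) * r ^ 2)))
    (Metric.ball_mem_nhds C one_pos)
    (Eventually.of_forall fun x => (contOn τ x).aestronglyMeasurable measurableSet_Ioi)
    (integrable_rpow_w hτ0 C)
    ((contOn_lin τ C).aestronglyMeasurable measurableSet_Ioi)
    ?_ ?_ ?_
  · rw [integral_deriv hτ C] at h
    exact h.2
  · filter_upwards [ae_restrict_mem measurableSet_Ioi] with r hr x hx
    have hr0 : (0:ℝ) < r := hr
    have hxK : |x| ≤ K := by
      rw [Metric.mem_ball, Real.dist_eq] at hx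
      have := abs_sub_abs_le_abs_sub x C
      linarith
    have hw : w x r ≤ Real.exp (K ^ 2 / 2) * Real.exp (-(1/4) * r ^ 2) := by
      rw [← Real.exp_add]
      apply Real.exp_le_exp.2
      have h1 := neg_sq_le x r
      have h2 : x ^ 2 ≤ K ^ 2 := by nlinarith [abs_nonneg x, sq_abs x]
      simp only [hK] at h2 ⊢
      nlinarith [h1, h2]
    have habs : |r + x| ≤ r + K := by
      have := abs_add_le r x
      rw [abs_of_nonneg hr0.le] at this
      linarith
    have hrτ : r ^ (τ + 1) = r ^ τ * r := Real.rpow_add_one hr0.ne' τ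
    rw [Real.norm_eq_abs, abs_mul, abs_mul, abs_neg,
      abs_of_nonneg (Real.rpow_nonneg hr0.le τ), abs_of_nonneg (w_pos x r).le]
    calc r ^ τ * (w x r * |r + x|)
        ≤ r ^ τ * ((Real.exp (K ^ 2 / 2) * Real.exp (-(1/4) * r ^ 2)) * (r + K)) := by
          apply mul_le_mul_of_nonneg_left _ (Real.rpow_nonneg hr0.le τ)
          apply mul_le_mul hw habs (abs_nonneg _) (by positivity)
      _ = Real.exp (K ^ 2 / 2) * (r ^ (τ + 1) * Real.exp (-(1/4) * r ^ 2))
          + (Real.exp (K ^ 2 / 2) * K) * (r ^ τ * Real.exp (-(1/4) * r ^ 2)) := by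
          rw [hrτ]; ring
  · exact (((integrableOn_rpow_mul_exp_neg_mul_sq (b := 1/4) (by norm_num) (by linarith)).const_mul
      (Real.exp (K ^ 2 / 2))).add
      (((integrableOn_rpow_mul_exp_neg_mul_sq (b := 1/4) (by norm_num) hτ0)).const_mul
      (Real.exp (K ^ 2 / 2) * K)))
  · filter_upwards [ae_restrict_mem measurableSet_Ioi] with r _ x _
    exact (hasDerivAt_w_param r x).const_mul (r ^ τ)

end IgaussAux

/-- Tangent-line bound: `I_τ(C) ≤ I_τ(D) exp(−τ (I_{τ−1}(D)/I_τ(D)) (C − D))`. -/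
theorem Igauss_tangent_bound (τ C D : ℝ) (hτ : 0 < τ) :
    Igauss τ C ≤
      Igauss τ D * Real.exp (-τ * (Igauss (τ - 1) D / Igauss τ D) * (C - D)) := by
  have hτ0 : (-1:ℝ) < τ := by linarith
  have hτ1 : (-1:ℝ) < τ - 1 := by linarith
  have hpos : ∀ E : ℝ, 0 < Igauss τ E := IgaussAux.igauss_pos hτ0
  set φ : ℝ → ℝ := fun E => Real.log (Igauss τ E) with hφdef
  set g : ℝ → ℝ := fun E => -τ * (Igauss (τ - 1) E / Igauss τ E) with hgdef
  have hderiv : ∀ E : ℝ, HasDerivAt φ (g E) E := by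
    intro E
    have h := (IgaussAux.hasDerivAt_igauss hτ E).log (hpos E).ne'
    convert h using 1
    rw [hgdef]
    field_simp
  have hanti : ∀ {E1 E2 : ℝ}, E1 ≤ E2 → g E2 ≤ g E1 := by
    intro E1 E2 h
    have hm := IgaussAux.ratio_mono hτ h
    have h1 := hpos E1
    have h2 := hpos E2
    have hdiv : Igauss (τ - 1) E1 / Igauss τ E1 ≤ Igauss (τ - 1) E2 / Igauss τ E2 := by
      rw [div_le_div_iff₀ h1 h2]
      linarith
    have := mul_le_mul_of_nonneg_left hdiv hτ.le
    rw [hgdef]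
    simp only
    nlinarith [this]
  have key : φ C ≤ φ D + g D * (C - D) := by
    rcases lt_trichotomy C D with hCD | rfl | hCD
    · obtain ⟨ξ, hξ, hslope⟩ := exists_hasDerivAt_eq_slope φ g hCD
        (fun x _ => (hderiv x).continuousAt.continuousWithinAt) (fun x _ => hderiv x)
      have h1 : g D ≤ g ξ := hanti hξ.2.le
      have h2 : φ D - φ C = g ξ * (D - C) := by
        rw [hslope, div_mul_cancel₀]
        exact sub_ne_zero.2 hCD.ne'
      have h3 := mul_le_mul_of_nonneg_right h1 (by linarith : (0:ℝ) ≤ D - C)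
      nlinarith [h2, h3]
    · simp
    · obtain ⟨ξ, hξ, hslope⟩ := exists_hasDerivAt_eq_slope φ g hCD
        (fun x _ => (hderiv x).continuousAt.continuousWithinAt) (fun x _ => hderiv x)
      have h1 : g ξ ≤ g D := hanti hξ.1.le
      have h2 : φ C - φ D = g ξ * (C - D) := by
        rw [hslope, div_mul_cancel₀]
        exact sub_ne_zero.2 hCD.ne'
      have h3 := mul_le_mul_of_nonneg_right h1 (by linarith : (0:ℝ) ≤ C - D)
      nlinarith [h2, h3]
  have hC : Igauss τ C = Real.exp (φ C) := (Real.exp_log (hpos C)).symm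
  rw [hC]
  calc Real.exp (φ C) ≤ Real.exp (φ D + g D * (C - D)) := Real.exp_le_exp.2 key
    _ = Igauss τ D * Real.exp (g D * (C - D)) := by
        rw [Real.exp_add, hφdef]
        simp only
        rw [Real.exp_log (hpos D)]
    _ = Igauss τ D * Real.exp (-τ * (Igauss (τ - 1) D / Igauss τ D) * (C - D)) := rfl
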